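/- arXiv:0902.4098 — 2 statements merged into one kernel-verified Lean document; each statement's English description precedes it below -/
import Mathlib

section
/- The out-forest dimension of a digraph equals the number of its basis bicomponents. -/
open Finset

variable {n : ℕ}

/-- Kirchhoff (Laplacian) matrix of the weighted digraph whose arc `(j, i)`
has weight `a i j` (so `a i j` is the weight with which agent `i` accounts for `j`). -/
noncomputable def kirchhoff (a : Matrix (Fin n) (Fin n) ℝ) : Matrix (Fin n) (Fin n) ℝ :=
  Matrix.of fun i j => if i = j then ∑ k ∈ Finset.univ.erase i, a i k else -a i j

/-- `F` is a spanning diverging forest (out-forest) of the digraph with arcs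
`u → v` present iff `a v u > 0`: every arc of `F` is an arc of the digraph,
every vertex has in-degree at most one in `F`, and `F` has no directed cycles
(equivalently, no infinite directed walk). -/
def IsOutForest (a : Matrix (Fin n) (Fin n) ℝ) (F : Finset (Fin n × Fin n)) : Prop :=
  (∀ e ∈ F, 0 < a e.2 e.1) ∧
  (∀ u u' v : Fin n, (u, v) ∈ F → (u', v) ∈ F → u = u') ∧
  ¬ ∃ f : ℕ → Fin n, ∀ k, (f k, f (k + 1)) ∈ F

/-- Number of arcs of a maximum out-forest. -/
noncomputable def maxForestSize (a : Matrix (Fin n) (Fin n) ℝ) : ℕ :=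
  sSup {k | ∃ F, IsOutForest a F ∧ F.card = k}

/-- The out-forest dimension: the number of trees in any maximum out-forest. -/
noncomputable def outForestDim (a : Matrix (Fin n) (Fin n) ℝ) : ℕ :=
  n - maxForestSize a

open Classical in
/-- The set of maximum out-forests. -/
noncomputable def maxForests (a : Matrix (Fin n) (Fin n) ℝ) :
    Finset (Finset (Fin n × Fin n)) :=
  Finset.univ.filter fun F => IsOutForest a F ∧ F.card = maxForestSize a

/-- The weight of a forest: the product of its arc weights. -/
def forestWeight (a : Matrix (Fin n) (Fin n) ℝ) (F : Finset (Fin n × Fin n)) : ℝ :=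
  ∏ e ∈ F, a e.2 e.1

/-- In forest `F`, vertex `i` belongs to the tree diverging from (rooted at) `j`. -/
def InTreeRootedAt (F : Finset (Fin n × Fin n)) (j i : Fin n) : Prop :=
  (∀ u, (u, j) ∉ F) ∧ Relation.ReflTransGen (fun x y => (x, y) ∈ F) j i

open Classical in
/-- The normalized matrix of maximum out-forests. -/
noncomputable def barJ (a : Matrix (Fin n) (Fin n) ℝ) : Matrix (Fin n) (Fin n) ℝ :=
  Matrix.of fun i j =>
    (∑ F ∈ (maxForests a).filter (fun F => InTreeRootedAt F j i), forestWeight a F) /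
    (∑ F ∈ maxForests a, forestWeight a F)

/-- Reachability by directed paths (arc `u → v` present iff `a v u > 0`). -/
def Reach (a : Matrix (Fin n) (Fin n) ℝ) (u v : Fin n) : Prop :=
  Relation.ReflTransGen (fun x y => 0 < a y x) u v

/-- The strong component (bicomponent) of vertex `v`. -/
def strongClass (a : Matrix (Fin n) (Fin n) ℝ) (v : Fin n) : Set (Fin n) :=
  {u | Reach a u v ∧ Reach a v u}

/-- The set of strong components. -/
def strongClasses (a : Matrix (Fin n) (Fin n) ℝ) : Set (Set (Fin n)) :=
  {S | ∃ v, S = strongClass a v}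

/-- Basis bicomponents: strong components with no arcs entering from outside. -/
def basisClasses (a : Matrix (Fin n) (Fin n) ℝ) : Set (Set (Fin n)) :=
  {S | (∃ v, S = strongClass a v) ∧ ∀ u v, u ∉ S → v ∈ S → ¬ 0 < a v u}

/-- Weak reachability (underlying undirected graph). -/
def WeakReach (a : Matrix (Fin n) (Fin n) ℝ) (u v : Fin n) : Prop :=
  Relation.ReflTransGen (fun x y => 0 < a y x ∨ 0 < a x y) u v

/-- The set of weak components. -/
def weakClasses (a : Matrix (Fin n) (Fin n) ℝ) : Set (Set (Fin n)) :=
  {S | ∃ v, S = {u | WeakReach a u v}}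

/-!
In an out-forest every vertex has at most one parent, so a forest with `k` arcs has `n - k`
roots. Every basis bicomponent contains a root of every out-forest: a parent-minimal vertex of
it has no parent inside it, and no arc enters it from outside. Conversely, one vertex chosen in
each basis bicomponent reaches every vertex, and a breadth-first search forest grown from these
vertices is an out-forest with exactly these roots.
-/

open Relation

section Relation

variable {α : Type*} {r : α → α → Prop}

theorem Finite.wellFounded_of_not_exists_chain [Finite α]
    (h : ¬ ∃ f : ℕ → α, ∀ k, r (f k) (f (k + 1))) : WellFounded r := by
  have hswap : WellFounded (Function.swap r) :=
    wellFounded_iff_isEmpty_descending_chain.2 ⟨fun ⟨f, hf⟩ => h ⟨f, hf⟩⟩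
  have : Std.Irrefl (TransGen r) :=
    ⟨fun x hx => hswap.transGen.asymmetric x x (transGen_swap.2 hx) (transGen_swap.2 hx)⟩
  exact Subrelation.wf TransGen.single (Finite.wellFounded_of_trans_of_irrefl (TransGen r))

theorem Finite.exists_reflTransGen_minimal [Finite α] (v : α) :
    ∃ u, ReflTransGen r u v ∧ ∀ w, ReflTransGen r w u → ReflTransGen r u w := by
  let lt : α → α → Prop := fun w u => ReflTransGen r w u ∧ ¬ ReflTransGen r u w
  have : IsTrans α lt :=
    ⟨fun _ _ _ hxy hyz => ⟨hxy.1.trans hyz.1, fun hzx => hyz.2 (hzx.trans hxy.1)⟩⟩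
  have : Std.Irrefl lt := ⟨fun x hx => hx.2 hx.1⟩
  obtain ⟨u, huv, hmin⟩ :=
    (Finite.wellFounded_of_trans_of_irrefl lt).has_min {u | ReflTransGen r u v} ⟨v, .refl⟩
  exact ⟨u, huv, fun w hwu => not_not.1 fun h => hmin w (hwu.trans huv) ⟨hwu, h⟩⟩

/-- Breadth-first search from `R`: `d` is the distance from `R`. -/
theorem exists_parent_rank_of_forall_reflTransGen {R : Set α}
    (h : ∀ v, ∃ u ∈ R, ReflTransGen r u v) :
    ∃ (p : α → α) (d : α → ℕ), ∀ v ∉ R, r (p v) v ∧ d (p v) < d v := by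
  classical
  let level : ℕ → Set α := fun k =>
    Nat.rec (motive := fun _ => Set α) R (fun _ L => R ∪ {v | ∃ u ∈ L, r u v}) k
  have hlevel : ∀ v, ∃ k, v ∈ level k := fun v => by
    obtain ⟨u, hu, huv⟩ := h v
    induction huv with
    | refl => exact ⟨0, hu⟩
    | tail _ hbc ih =>
      obtain ⟨k, hk⟩ := ih
      exact ⟨k + 1, Or.inr ⟨_, hk, hbc⟩⟩
  let d (v : α) : ℕ := Nat.find (hlevel v)
  have hparent : ∀ v, ∃ u, v ∉ R → r u v ∧ d u < d v := fun v => by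
    by_cases hv : v ∈ R
    · exact ⟨v, fun h => (h hv).elim⟩
    obtain ⟨m, hm⟩ : ∃ m, d v = m + 1 :=
      Nat.exists_eq_succ_of_ne_zero fun h0 => hv ((Nat.find_eq_zero _).1 h0)
    have hspec : v ∈ level (m + 1) := hm ▸ Nat.find_spec (hlevel v)
    obtain ⟨u, hu, huv⟩ := hspec.resolve_left hv
    exact ⟨u, fun _ => ⟨huv, (Nat.find_min' (hlevel u) hu).trans_lt (by omega)⟩⟩
  choose p hp using hparent
  exact ⟨p, d, fun v hv => hp v hv⟩

end Relation

section Forest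

variable {a : Matrix (Fin n) (Fin n) ℝ} {F : Finset (Fin n × Fin n)}

def roots (F : Finset (Fin n × Fin n)) : Finset (Fin n) :=
  univ.filter fun v => ∀ u, (u, v) ∉ F

theorem IsOutForest.card_add_card_roots (hF : IsOutForest a F) :
    F.card + (roots F).card = n := by
  have hinj : Set.InjOn Prod.snd (F : Set (Fin n × Fin n)) := fun e he e' he' h =>
    Prod.ext (hF.2.1 e.1 e'.1 e.2 he (h ▸ he')) h
  have himage : F.image Prod.snd = (roots F)ᶜ := by
    ext v
    simp [roots]
  rw [← card_image_of_injOn hinj, himage, card_compl_add_card, Fintype.card_fin]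

theorem IsOutForest.wellFounded (hF : IsOutForest a F) : WellFounded fun u v => (u, v) ∈ F :=
  Finite.wellFounded_of_not_exists_chain hF.2.2

theorem mem_strongClass_self (v : Fin n) : v ∈ strongClass a v :=
  ⟨.refl, .refl⟩

theorem strongClass_eq_of_mem {u v : Fin n} (h : u ∈ strongClass a v) :
    strongClass a u = strongClass a v := by
  ext w
  exact ⟨fun hw => ⟨hw.1.trans h.1, h.2.trans hw.2⟩, fun hw => ⟨hw.1.trans h.2, h.1.trans hw.2⟩⟩

theorem IsOutForest.exists_mem_roots (hF : IsOutForest a F) {S : Set (Fin n)}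
    (hS : S ∈ basisClasses a) : ∃ v ∈ S, v ∈ roots F := by
  obtain ⟨⟨v, rfl⟩, hclosed⟩ := hS
  obtain ⟨w, hwS, hmin⟩ := hF.wellFounded.has_min _ ⟨v, mem_strongClass_self v⟩
  refine ⟨w, hwS, mem_filter.2 ⟨mem_univ w, fun u hu => ?_⟩⟩
  exact hmin u (not_not.1 fun huS => hclosed u w huS hwS (hF.1 _ hu)) hu

theorem IsOutForest.ncard_basisClasses_le (hF : IsOutForest a F) :
    (basisClasses a).ncard ≤ (roots F).card := by
  have hsub : basisClasses a ⊆ strongClass a '' (roots F : Set (Fin n)) := fun S hS => by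
    obtain ⟨v, hvS, hv⟩ := hF.exists_mem_roots hS
    obtain ⟨⟨w, rfl⟩, -⟩ := hS
    exact ⟨v, hv, strongClass_eq_of_mem hvS⟩
  calc (basisClasses a).ncard ≤ (strongClass a '' (roots F : Set (Fin n))).ncard :=
        Set.ncard_le_ncard hsub
    _ ≤ (roots F : Set (Fin n)).ncard := Set.ncard_image_le
    _ = (roots F).card := Set.ncard_coe_finset _

theorem IsOutForest.card_add_ncard_basisClasses_le (hF : IsOutForest a F) :
    F.card + (basisClasses a).ncard ≤ n := by
  have := hF.card_add_card_roots
  have := hF.ncard_basisClasses_le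
  omega

theorem strongClass_mem_basisClasses {u : Fin n} (hu : ∀ w, Reach a w u → Reach a u w) :
    strongClass a u ∈ basisClasses a :=
  ⟨⟨u, rfl⟩, fun x _ hx hy hxy =>
    have hxu : Reach a x u := .head hxy hy.1
    hx ⟨hxu, hu x hxu⟩⟩

/-- Take one vertex in each basis class: every vertex is reached from a vertex that is
minimal for reachability, and the class of such a vertex is a basis class. -/
theorem exists_finset_forall_reach (a : Matrix (Fin n) (Fin n) ℝ) :
    ∃ R : Finset (Fin n), R.card ≤ (basisClasses a).ncard ∧ ∀ v, ∃ u ∈ R, Reach a u v := by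
  classical
  obtain ⟨R, hR, hbij⟩ :=
    Set.exists_subset_bijOn {v | strongClass a v ∈ basisClasses a} (strongClass a)
  refine ⟨R.toFinset, ?_, fun v => ?_⟩
  · calc R.toFinset.card = R.ncard := (Set.ncard_eq_toFinset_card' R).symm
      _ = (strongClass a '' R).ncard := hbij.injOn.ncard_image.symm
      _ ≤ (basisClasses a).ncard :=
        Set.ncard_le_ncard (Set.image_subset_iff.2 fun v hv => hR hv)
  · obtain ⟨u, huv, hmin⟩ := Finite.exists_reflTransGen_minimal (r := fun x y => 0 < a y x) v
    obtain ⟨w, hwR, hwu⟩ := hbij.surjOn ⟨u, strongClass_mem_basisClasses hmin, rfl⟩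
    have hu : u ∈ strongClass a w := hwu ▸ mem_strongClass_self u
    exact ⟨w, Set.mem_toFinset.2 hwR, hu.2.trans huv⟩

theorem exists_isOutForest_card_add_card (R : Finset (Fin n)) (hR : ∀ v, ∃ u ∈ R, Reach a u v) :
    ∃ F, IsOutForest a F ∧ F.card + R.card = n := by
  obtain ⟨p, d, hp⟩ := exists_parent_rank_of_forall_reflTransGen (R := (R : Set (Fin n))) hR
  refine ⟨Rᶜ.image fun v => (p v, v), ⟨?_, ?_, ?_⟩, ?_⟩
  · simp only [mem_image, mem_compl]
    rintro _ ⟨v, hv, rfl⟩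
    exact (hp v hv).1
  · simp only [mem_image, Prod.mk.injEq]
    rintro u u' v ⟨w, -, rfl, rfl⟩ ⟨w', -, rfl, rfl⟩
    rfl
  · rintro ⟨f, hf⟩
    have hmono : StrictMono (d ∘ f) := strictMono_nat_of_lt_succ fun k => by
      obtain ⟨v, hv, hpv, hvf⟩ : ∃ v ∉ R, p v = f k ∧ v = f (k + 1) := by simpa using hf k
      simpa only [Function.comp_apply, ← hpv, ← hvf] using (hp v (mem_coe.not.2 hv)).2
    obtain ⟨i, j, hij, hfij⟩ := Finite.exists_ne_map_eq_of_infinite f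
    exact hij (hmono.injective (congrArg d hfij))
  · rw [card_image_of_injective _ fun _ _ h => congrArg Prod.snd h,
      card_compl_add_card, Fintype.card_fin]

theorem exists_isOutForest_le_card_add_ncard_basisClasses (a : Matrix (Fin n) (Fin n) ℝ) :
    ∃ F, IsOutForest a F ∧ n ≤ F.card + (basisClasses a).ncard := by
  obtain ⟨R, hcard, hR⟩ := exists_finset_forall_reach a
  obtain ⟨F, hF, hFR⟩ := exists_isOutForest_card_add_card R hR
  exact ⟨F, hF, by omega⟩

end Forest

theorem outForestDim_eq_card_basisClasses_general {n : ℕ} (a : Matrix (Fin n) (Fin n) ℝ) :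
    outForestDim a = (basisClasses a).ncard := by
  obtain ⟨F, hF, hF_ge⟩ := exists_isOutForest_le_card_add_ncard_basisClasses a
  have hF_le := hF.card_add_ncard_basisClasses_le
  have hmax : maxForestSize a = F.card := by
    refine IsGreatest.csSup_eq ⟨⟨F, hF, rfl⟩, ?_⟩
    rintro _ ⟨G, hG, rfl⟩
    have hG_le := hG.card_add_ncard_basisClasses_le
    omega
  rw [outForestDim, hmax]
  omega

/-- The out-forest dimension of a digraph equals the number of its basis
bicomponents. -/
theorem outForestDim_eq_card_basisClasses {n : ℕ} (a : Matrix (Fin n) (Fin n) ℝ)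
    (hnn : ∀ i j, 0 ≤ a i j) :
    outForestDim a = (basisClasses a).ncard :=
  outForestDim_eq_card_basisClasses_general a
end

section
/- Let J̄ be the normalized matrix of maximum out-forests of a weighted digraph Γ with Kirchhoff matrix L and out-forest dimension d. Then rank J̄ = d, J̄² = J̄, and L·J̄ = J̄·L = 0. -/
open Finset

variable {n : ℕ}

/-!
Write `Q_k` for the matrix whose `(i, j)` entry is the weight of the out-forests with `k` arcs in
which `i` lies in the tree rooted at `j`, and `σ_k` for the total weight of these forests, so that
`J̄ = Q_m / σ_m` where `m` is the size of a maximum out-forest.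

Pairs (forest, optional extra arc `l → i`) are matched by exchanging the parent arc of `i` with
the extra arc, unless this would close a cycle. This weight-preserving involution gives
`Q_{k+1} + L Q_k = σ_{k+1} I`, and `Q_0 = I`. No out-forest has `m + 1` arcs, so `L Q_m = 0`; by
induction every `Q_k` commutes with `L`, hence `Q_m L = 0`, and then `Q_m Q_k = σ_k Q_m`. So `J̄`
is an idempotent annihilated by `L` on both sides, and its rank equals its trace
`(n - m) σ_m / σ_m`, as every forest with `m` arcs has `n - m` roots.
-/

open Finset Relation

local notation:50 x " ⟶[" F "]* " y => ReflTransGen (fun u v => (u, v) ∈ F) x y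

theorem not_exists_walk_iff_acyclic {α : Type*} [Finite α] {r : α → α → Prop} :
    (¬∃ f : ℕ → α, ∀ k, r (f k) (f (k + 1))) ↔
      ∀ x y, r x y → ¬ReflTransGen r y x := by
  have hwalk :
      (¬∃ f : ℕ → α, ∀ k, r (f k) (f (k + 1))) ↔ WellFounded (Function.swap r) := by
    rw [wellFounded_iff_isEmpty_descending_chain, isEmpty_subtype, not_exists]
  have hcyc :
      (∀ x y, r x y → ¬ReflTransGen r y x) ↔ ∀ x, ¬TransGen (Function.swap r) x x := by
    simp only [fun x => @transGen_swap α r x x, TransGen.head'_iff, not_exists, not_and]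
  rw [hwalk, hcyc]
  refine ⟨fun h x hx => h.transGen.asymmetric _ _ hx hx, fun h => ?_⟩
  have : IsTrans α (TransGen (Function.swap r)) := ⟨fun _ _ _ => TransGen.trans⟩
  have : Std.Irrefl (TransGen (Function.swap r)) := ⟨h⟩
  exact Subrelation.wf TransGen.single (Finite.wellFounded_of_trans_of_irrefl _)

theorem Matrix.rank_eq_trace_of_isIdempotentElem {K m : Type*} [Field K] [Fintype m]
    [DecidableEq m] {A : Matrix m m K} (hA : IsIdempotentElem A) : (A.rank : K) = A.trace := by
  have he : IsIdempotentElem (Matrix.toLin' A) := hA.map Matrix.toLinAlgEquiv'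
  rw [Matrix.rank, ← Matrix.toLin'_apply', ← Matrix.trace_toLin'_eq,
    ((LinearMap.isProj_range_iff_isIdempotentElem _).mpr he).trace]

section Arcs

variable {V : Type*} {F G : Finset (V × V)} {i j l x y : V}

theorem reach_mono (hFG : F ⊆ G) (h : x ⟶[F]* y) : x ⟶[G]* y :=
  ReflTransGen.mono (fun _ _ huv => hFG huv) _ _ h

theorem eq_of_reach_of_forall_not_mem (hj : ∀ u, (u, j) ∉ F) (h : x ⟶[F]* j) : x = j := by
  rcases h.cases_tail with rfl | ⟨u, -, hu⟩
  · rfl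
  · exact absurd hu (hj u)

variable {o o' : Option V}

def arcsInto (i : V) (o : Option V) : Finset (V × V) :=
  (o.map (·, i)).toFinset

theorem mem_arcsInto {u v : V} : (u, v) ∈ arcsInto i o ↔ v = i ∧ u ∈ o := by
  cases o <;> simp [arcsInto, eq_comm, and_comm]

open Classical in
noncomputable def parentOf (F : Finset (V × V)) (i : V) : Option V :=
  if h : ∃ u, (u, i) ∈ F then some h.choose else none

theorem mem_parentOf (huniq : ∀ u u', (u, i) ∈ F → (u', i) ∈ F → u = u') {u : V} :
    u ∈ parentOf F i ↔ (u, i) ∈ F := by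
  unfold parentOf
  split_ifs with h
  · exact ⟨fun hu => Option.some_inj.mp hu ▸ h.choose_spec,
      fun hu => congrArg some (huniq _ _ h.choose_spec hu)⟩
  · exact ⟨fun hu => absurd hu (Option.not_mem_none u), fun hu => absurd ⟨u, hu⟩ h⟩

variable [DecidableEq V]

theorem reach_insert_or_reach_from_target (h : x ⟶[insert (l, i) G]* y) :
    (x ⟶[G]* y) ∨ (i ⟶[G]* y) := by
  induction h with
  | refl => exact .inl .refl
  | tail _ hbc ih =>
    rcases mem_insert.mp hbc with he | hbc
    · exact .inr ((Prod.mk.inj he).2 ▸ .refl)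
    · exact ih.imp (·.tail hbc) (·.tail hbc)

theorem reach_insert_or_reach_to_source (h : x ⟶[insert (l, i) G]* y) :
    (x ⟶[G]* y) ∨ (x ⟶[G]* l) := by
  induction h using ReflTransGen.head_induction_on with
  | refl => exact .inl .refl
  | head hbc _ ih =>
    rcases mem_insert.mp hbc with he | hbc
    · exact .inr ((Prod.mk.inj he).1 ▸ .refl)
    · exact ih.imp (·.head hbc) (·.head hbc)

theorem reach_filter_or (h : x ⟶[F]* y) :
    (x ⟶[F.filter (·.2 ≠ i)]* y) ∨ (i ⟶[F.filter (·.2 ≠ i)]* y) := by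
  induction h with
  | refl => exact .inl .refl
  | @tail b c _ hbc ih =>
    by_cases hci : c = i
    · exact .inr (hci ▸ .refl)
    · have hbc' : (b, c) ∈ F.filter (·.2 ≠ i) := mem_filter.mpr ⟨hbc, hci⟩
      exact ih.imp (·.tail hbc') (·.tail hbc')

def reparent (F : Finset (V × V)) (i : V) (o : Option V) : Finset (V × V) :=
  F.filter (·.2 ≠ i) ∪ arcsInto i o

theorem mem_reparent {u v : V} :
    (u, v) ∈ reparent F i o ↔ if v = i then u ∈ o else (u, v) ∈ F := by
  by_cases hv : v = i <;> simp [reparent, mem_arcsInto, hv]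

theorem reparent_some : reparent F i (some l) = insert (l, i) (F.filter (·.2 ≠ i)) := by
  ext ⟨u, v⟩
  by_cases hv : v = i
  · simp [mem_reparent, hv, eq_comm]
  · simp [mem_reparent, hv]

theorem reparent_none_subset : reparent F i none ⊆ F := by
  rintro ⟨u, v⟩ h
  rw [mem_reparent] at h
  split_ifs at h
  · exact absurd h (Option.not_mem_none u)
  · exact h

theorem filter_subset_reparent : F.filter (·.2 ≠ i) ⊆ reparent F i o :=
  subset_union_left

theorem filter_reparent : (reparent F i o).filter (·.2 ≠ i) = F.filter (·.2 ≠ i) := by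
  ext ⟨u, v⟩
  by_cases hv : v = i <;> simp [mem_reparent, hv]

theorem reparent_reparent : reparent (reparent F i o) i o' = reparent F i o' := by
  rw [reparent, filter_reparent, reparent]

theorem reparent_parentOf (huniq : ∀ u u', (u, i) ∈ F → (u', i) ∈ F → u = u') :
    reparent F i (parentOf F i) = F := by
  ext ⟨u, v⟩
  rw [mem_reparent]
  split_ifs with hv
  · subst hv
    exact mem_parentOf huniq
  · rfl

@[to_additive]
theorem prod_reparent_mul_prod_arcsInto {M : Type*} [CommMonoid M] (φ : V × V → M)
    (huniq : ∀ u u', (u, i) ∈ F → (u', i) ∈ F → u = u') :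
    (∏ e ∈ reparent F i o, φ e) * ∏ e ∈ arcsInto i (parentOf F i), φ e =
      (∏ e ∈ F, φ e) * ∏ e ∈ arcsInto i o, φ e := by
  conv_rhs => rw [← reparent_parentOf huniq]
  have hdisj : ∀ o : Option V, Disjoint (F.filter (·.2 ≠ i)) (arcsInto i o) := by
    intro o
    rw [disjoint_left]
    rintro ⟨u, v⟩ h h'
    exact (mem_filter.mp h).2 (mem_arcsInto.mp h').1
  rw [reparent, reparent, prod_union (hdisj _), prod_union (hdisj _), mul_right_comm]

theorem parentOf_reparent : parentOf (reparent F i o) i = o := by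
  have hmem : ∀ u, (u, i) ∈ reparent F i o ↔ u ∈ o := fun u => by
    rw [mem_reparent, if_pos rfl]
  refine Option.ext fun u => ?_
  change u ∈ parentOf (reparent F i o) i ↔ u ∈ o
  rw [mem_parentOf (fun u u' hu hu' => Option.mem_unique ((hmem u).mp hu) ((hmem u').mp hu')),
    hmem]

open Classical in
/-- The pair is left fixed when `p.1` lies in the subtree of `i`, where the arc `p.1 → i` would
close a cycle. -/
noncomputable def swapParent (i : V) (p : Option V × Finset (V × V)) :
    Option V × Finset (V × V) :=
  if ∃ l ∈ p.1, i ⟶[p.2]* l then p else (parentOf p.2 i, reparent p.2 i p.1)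

theorem swapParent_swapParent (huniq : ∀ u u', (u, i) ∈ F → (u', i) ∈ F → u = u')
    (hacyc : ∀ u, (u, i) ∈ F → ¬ i ⟶[F]* u) :
    swapParent i (swapParent i (o, F)) = (o, F) := by
  by_cases h : ∃ l ∈ o, i ⟶[F]* l
  · have hfix : swapParent i (o, F) = (o, F) := if_pos h
    rw [hfix, hfix]
  · have h' : ¬ ∃ u ∈ parentOf F i, i ⟶[reparent F i o]* u := by
      rintro ⟨u, hu, hiu⟩
      have hiu' := reach_filter_or (i := i) hiu
      rw [filter_reparent, or_self] at hiu'
      exact hacyc u ((mem_parentOf huniq).mp hu) (reach_mono (filter_subset _ F) hiu')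
    have hswap : swapParent i (o, F) = (parentOf F i, reparent F i o) := if_neg h
    rw [hswap, swapParent, if_neg h', parentOf_reparent, reparent_reparent,
      reparent_parentOf huniq]

theorem prod_swapParent {M : Type*} [CommMonoid M] (φ : V × V → M)
    (huniq : ∀ u u', (u, i) ∈ F → (u', i) ∈ F → u = u') :
    (∏ e ∈ (swapParent i (o, F)).2, φ e) * ∏ e ∈ arcsInto i (swapParent i (o, F)).1, φ e =
      (∏ e ∈ F, φ e) * ∏ e ∈ arcsInto i o, φ e := by
  unfold swapParent
  split_ifs
  · rfl
  · exact prod_reparent_mul_prod_arcsInto φ huniq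

theorem card_filter_forall_not_mem_add_card [Fintype V]
    (huniq : ∀ u u' v, (u, v) ∈ F → (u', v) ∈ F → u = u') :
    #(univ.filter fun v => ∀ u, (u, v) ∉ F) + #F = Fintype.card V := by
  have hheads : #F = #(univ.filter fun v => ∃ u, (u, v) ∈ F) := by
    rw [← card_image_of_injOn (f := Prod.snd) fun e he e' he' h => Prod.ext
      (huniq e.1 e'.1 e.2 (by simpa using he) (by simpa [h] using he')) h]
    congr 1
    ext v
    simp
  rw [hheads, add_comm, ← card_univ]
  simpa only [not_exists] using card_filter_add_card_filter_not (s := univ)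
    (p := fun v => ∃ u, (u, v) ∈ F)

end Arcs

section Forests

variable {a : Matrix (Fin n) (Fin n) ℝ} {F G : Finset (Fin n × Fin n)} {i j l v x : Fin n}
  {o : Option (Fin n)}

theorem isOutForest_iff :
    IsOutForest a F ↔ (∀ e ∈ F, 0 < a e.2 e.1) ∧
      (∀ u u' v, (u, v) ∈ F → (u', v) ∈ F → u = u') ∧
      ∀ x y, (x, y) ∈ F → ¬ y ⟶[F]* x := by
  rw [IsOutForest, not_exists_walk_iff_acyclic (r := fun x y => (x, y) ∈ F)]

theorem isOutForest_empty : IsOutForest a ∅ :=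
  isOutForest_iff.mpr ⟨by simp, by simp, by simp⟩

namespace IsOutForest

theorem pos (h : IsOutForest a F) {u v : Fin n} (huv : (u, v) ∈ F) : 0 < a v u :=
  h.1 _ huv

theorem eq_of_mem (h : IsOutForest a F) {u u' v : Fin n} (hu : (u, v) ∈ F) (hu' : (u', v) ∈ F) :
    u = u' :=
  h.2.1 u u' v hu hu'

theorem not_reach_of_mem (h : IsOutForest a F) (hxy : (x, v) ∈ F) : ¬ v ⟶[F]* x :=
  (isOutForest_iff.mp h).2.2 x v hxy

theorem ne_of_mem (h : IsOutForest a F) (hxv : (x, v) ∈ F) : x ≠ v := by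
  rintro rfl
  exact h.not_reach_of_mem hxv .refl

theorem mono (h : IsOutForest a F) (hGF : G ⊆ F) : IsOutForest a G :=
  ⟨fun e he => h.1 e (hGF he), fun _ _ _ hu hu' => h.eq_of_mem (hGF hu) (hGF hu'),
    fun ⟨f, hf⟩ => h.2.2 ⟨f, fun k => hGF (hf k)⟩⟩

theorem insert (hG : IsOutForest a G) (hpos : 0 < a i l) (hroot : ∀ u, (u, i) ∉ G)
    (hnr : ¬ i ⟶[G]* l) : IsOutForest a (insert (l, i) G) := by
  refine isOutForest_iff.mpr ⟨?_, ?_, ?_⟩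
  · simpa only [forall_mem_insert] using ⟨hpos, hG.1⟩
  · intro u u' v hu hu'
    rcases mem_insert.mp hu with he | hu <;> rcases mem_insert.mp hu' with he' | hu'
    · exact (Prod.mk.inj he).1.trans (Prod.mk.inj he').1.symm
    · exact absurd ((Prod.mk.inj he).2 ▸ hu') (hroot u')
    · exact absurd ((Prod.mk.inj he').2 ▸ hu) (hroot u)
    · exact hG.eq_of_mem hu hu'
  · intro x y hxy hyx
    rcases mem_insert.mp hxy with he | hxy
    · obtain ⟨rfl, rfl⟩ := Prod.mk.inj he
      exact (reach_insert_or_reach_from_target hyx).elim hnr hnr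
    · rcases reach_insert_or_reach_from_target hyx with hyx' | hix
      · exact hG.not_reach_of_mem hxy hyx'
      · rcases reach_insert_or_reach_to_source hyx with hyx' | hyl
        · exact hG.not_reach_of_mem hxy hyx'
        · exact hnr ((hix.tail hxy).trans hyl)

theorem reparent (h : IsOutForest a F) (ho : ∀ l ∈ o, 0 < a i l ∧ ¬ i ⟶[F]* l) :
    IsOutForest a (reparent F i o) := by
  cases o with
  | none => exact h.mono reparent_none_subset
  | some l =>
    obtain ⟨hpos, hnr⟩ := ho l rfl
    rw [reparent_some]
    exact (h.mono (filter_subset _ _)).insert hpos (by simp)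
      (fun hil => hnr (reach_mono (filter_subset _ _) hil))

theorem swapParent_swapParent (h : IsOutForest a F) :
    swapParent i (swapParent i (o, F)) = (o, F) :=
  _root_.swapParent_swapParent (fun _ _ => h.eq_of_mem) (fun _ => h.not_reach_of_mem)

end IsOutForest

namespace InTreeRootedAt

theorem eq_of_forall_not_mem (h : InTreeRootedAt F j i) (hi : ∀ u, (u, i) ∉ F) : j = i :=
  eq_of_reach_of_forall_not_mem hi h.2

theorem exists_parent (h : InTreeRootedAt F j i) (hij : i ≠ j) :
    ∃ p, (p, i) ∈ F ∧ j ⟶[F]* p := by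
  rcases h.2.cases_tail with rfl | ⟨p, hjp, hpi⟩
  · exact absurd rfl hij
  · exact ⟨p, hpi, hjp⟩

theorem of_reach (hF : IsOutForest a F) (h : InTreeRootedAt F j l) (hxl : x ⟶[F]* l) :
    InTreeRootedAt F j x := by
  have huniq : Relator.RightUnique (Function.swap fun u v => (u, v) ∈ F) :=
    fun _ _ _ hu hu' => hF.eq_of_mem hu hu'
  rcases ReflTransGen.total_of_right_unique huniq (reflTransGen_swap.mpr h.2)
    (reflTransGen_swap.mpr hxl) with hxj | hjx
  · obtain rfl := eq_of_reach_of_forall_not_mem h.1 (reflTransGen_swap.mp hxj)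
    exact ⟨h.1, .refl⟩
  · exact ⟨h.1, reflTransGen_swap.mp hjx⟩

theorem reparent (h : InTreeRootedAt F j v) (hji : j ≠ i) (hv : ¬ i ⟶[F]* v) :
    InTreeRootedAt (reparent F i o) j v := by
  refine ⟨fun u hu => h.1 u ?_, reach_mono filter_subset_reparent ?_⟩
  · rwa [mem_reparent, if_neg hji] at hu
  · exact (reach_filter_or h.2).resolve_right
      fun hiv => hv (reach_mono (filter_subset _ _) hiv)

end InTreeRootedAt

/-- A forest `p.2` together with an optional extra arc `p.1 → i` of positive weight, `k + 1`
arcs in all. -/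
def IsAugmentedForest (a : Matrix (Fin n) (Fin n) ℝ) (k : ℕ) (i : Fin n)
    (p : Option (Fin n) × Finset (Fin n × Fin n)) : Prop :=
  IsOutForest a p.2 ∧ p.2.card + (arcsInto i p.1).card = k + 1 ∧
    ∀ l ∈ p.1, l ≠ i ∧ 0 < a i l

variable {k : ℕ} {p : Option (Fin n) × Finset (Fin n × Fin n)}

theorem isAugmentedForest_swapParent (hp : IsAugmentedForest a k i p) :
    IsAugmentedForest a k i (swapParent i p) := by
  obtain ⟨o, F⟩ := p
  obtain ⟨hF, hcard, ho⟩ := hp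
  unfold swapParent
  split_ifs with h
  · exact ⟨hF, hcard, ho⟩
  · simp only [not_exists, not_and] at h
    refine ⟨hF.reparent fun l hl => ⟨(ho l hl).2, h l hl⟩, ?_, fun u hu => ?_⟩
    · rw [card_eq_sum_ones, card_eq_sum_ones, sum_reparent_add_sum_arcsInto _
        (fun _ _ => hF.eq_of_mem), ← card_eq_sum_ones, ← card_eq_sum_ones, hcard]
    · have hui := (mem_parentOf (fun _ _ => hF.eq_of_mem)).mp hu
      exact ⟨hF.ne_of_mem hui, hF.pos hui⟩

theorem swapParent_elim_of_inTreeRootedAt (hp : IsAugmentedForest a k i p)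
    (hT : InTreeRootedAt p.2 j i) :
    (swapParent i p).1.elim (i = j) (InTreeRootedAt (swapParent i p).2 j) := by
  obtain ⟨o, F⟩ := p
  have hF := hp.1
  unfold swapParent
  split_ifs with h
  · obtain ⟨l, rfl, hil⟩ := h
    exact ⟨hT.1, hT.2.trans hil⟩
  · cases hP : parentOf F i with
    | none =>
      exact (hT.eq_of_forall_not_mem fun u hu =>
        Option.not_mem_none u (hP ▸ (mem_parentOf (fun _ _ => hF.eq_of_mem)).mpr hu)).symm
    | some q =>
      have hqi : (q, i) ∈ F := (mem_parentOf (fun _ _ => hF.eq_of_mem)).mp hP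
      have hji : j ≠ i := by
        rintro rfl
        exact hT.1 q hqi
      obtain ⟨q', hq'i, hjq'⟩ := hT.exists_parent hji.symm
      obtain rfl := hF.eq_of_mem hq'i hqi
      exact InTreeRootedAt.reparent ⟨hT.1, hjq'⟩ hji (hF.not_reach_of_mem hqi)

theorem inTreeRootedAt_swapParent_of_elim (hp : IsAugmentedForest a k i p)
    (hT : p.1.elim (i = j) (InTreeRootedAt p.2 j)) :
    InTreeRootedAt (swapParent i p).2 j i := by
  obtain ⟨o, F⟩ := p
  have hF := hp.1
  unfold swapParent
  split_ifs with h
  · obtain ⟨l, rfl, hil⟩ := h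
    exact InTreeRootedAt.of_reach hF hT hil
  · simp only [not_exists, not_and] at h
    cases o with
    | none =>
      obtain rfl : i = j := hT
      exact ⟨fun u hu => by simp [mem_reparent] at hu, .refl⟩
    | some l =>
      have hil := h l rfl
      have hji : j ≠ i := by
        rintro rfl
        exact hil hT.2
      have hT' := InTreeRootedAt.reparent (o := some l) hT hji hil
      exact ⟨hT'.1, hT'.2.tail (mem_reparent.mpr (by simp))⟩

open Classical in
theorem sum_inTreeRootedAt_eq_sum_elim (k : ℕ) (i j : Fin n) :
    ∑ p ∈ univ.filter (fun p => IsAugmentedForest a k i p ∧ InTreeRootedAt p.2 j i),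
        forestWeight a p.2 * forestWeight a (arcsInto i p.1) =
      ∑ p ∈ univ.filter (fun p => IsAugmentedForest a k i p ∧
          p.1.elim (i = j) (InTreeRootedAt p.2 j)),
        forestWeight a p.2 * forestWeight a (arcsInto i p.1) := by
  refine sum_nbij' (swapParent i) (swapParent i) ?_ ?_ ?_ ?_ ?_ <;> intro p hp <;>
    simp only [mem_filter, mem_univ, true_and] at hp ⊢
  · exact ⟨isAugmentedForest_swapParent hp.1, swapParent_elim_of_inTreeRootedAt hp.1 hp.2⟩
  · exact ⟨isAugmentedForest_swapParent hp.1, inTreeRootedAt_swapParent_of_elim hp.1 hp.2⟩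
  · exact hp.1.1.swapParent_swapParent
  · exact hp.1.1.swapParent_swapParent
  · exact (prod_swapParent (fun e => a e.2 e.1) (fun _ _ => hp.1.1.eq_of_mem)).symm

end Forests

section ForestMatrix

variable {a : Matrix (Fin n) (Fin n) ℝ}

open Classical in
noncomputable def forestsOfCard (a : Matrix (Fin n) (Fin n) ℝ) (k : ℕ) :
    Finset (Finset (Fin n × Fin n)) :=
  univ.filter fun F => IsOutForest a F ∧ F.card = k

/-- The total weight `σ_k`. -/
noncomputable def forestWeightSum (a : Matrix (Fin n) (Fin n) ℝ) (k : ℕ) : ℝ :=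
  ∑ F ∈ forestsOfCard a k, forestWeight a F

open Classical in
/-- The matrix `Q_k`. -/
noncomputable def forestMatrix (a : Matrix (Fin n) (Fin n) ℝ) (k : ℕ) :
    Matrix (Fin n) (Fin n) ℝ :=
  Matrix.of fun i j =>
    ∑ F ∈ (forestsOfCard a k).filter (fun F => InTreeRootedAt F j i), forestWeight a F

theorem sum_ite_pos_eq_sum_erase (hnn : ∀ i j, 0 ≤ a i j) (i : Fin n) (g : Fin n → ℝ) :
    ∑ l, (if l ≠ i ∧ 0 < a i l then a i l * g l else 0) =
      ∑ l ∈ univ.erase i, a i l * g l := by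
  rw [← filter_ne' univ i, sum_filter]
  refine sum_congr rfl fun l _ => ?_
  by_cases hl : l ≠ i
  · rcases (hnn i l).lt_or_eq with hpos | hzero
    · simp [hl, hpos]
    · simp [hl, ← hzero]
  · simp [hl]

open Classical in
theorem sum_augmented_inTreeRootedAt (hnn : ∀ i j, 0 ≤ a i j) (k : ℕ) (i j : Fin n) :
    ∑ p ∈ univ.filter (fun p => IsAugmentedForest a k i p ∧ InTreeRootedAt p.2 j i),
        forestWeight a p.2 * forestWeight a (arcsInto i p.1) =
      forestMatrix a (k + 1) i j + ∑ l ∈ univ.erase i, a i l * forestMatrix a k i j := by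
  rw [sum_filter, Fintype.sum_prod_type, Fintype.sum_option, ← sum_ite_pos_eq_sum_erase hnn]
  congr 1
  · simp [forestMatrix, forestsOfCard, IsAugmentedForest, arcsInto, forestWeight, sum_filter,
      filter_filter, and_assoc]
  · refine sum_congr rfl fun l _ => ?_
    by_cases hli : l = i <;> by_cases hpos : 0 < a i l <;>
      simp [forestMatrix, forestsOfCard, IsAugmentedForest, arcsInto, forestWeight, sum_filter,
        and_assoc, hli, hpos, mul_sum, mul_comm, ← ite_and]

open Classical in
theorem sum_augmented_elim (hnn : ∀ i j, 0 ≤ a i j) (k : ℕ) (i j : Fin n) :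
    ∑ p ∈ univ.filter (fun p => IsAugmentedForest a k i p ∧
          p.1.elim (i = j) (InTreeRootedAt p.2 j)),
        forestWeight a p.2 * forestWeight a (arcsInto i p.1) =
      (if i = j then forestWeightSum a (k + 1) else 0) +
        ∑ l ∈ univ.erase i, a i l * forestMatrix a k l j := by
  rw [sum_filter, Fintype.sum_prod_type, Fintype.sum_option, ← sum_ite_pos_eq_sum_erase hnn]
  congr 1
  · by_cases hij : i = j <;>
      simp [forestWeightSum, forestsOfCard, IsAugmentedForest, arcsInto, forestWeight, sum_filter,
        hij]
  · refine sum_congr rfl fun l _ => ?_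
    by_cases hli : l = i <;> by_cases hpos : 0 < a i l <;>
      simp [forestMatrix, forestsOfCard, IsAugmentedForest, arcsInto, forestWeight, sum_filter,
        and_assoc, hli, hpos, mul_sum, mul_comm, ← ite_and]

theorem kirchhoff_mul_apply (M : Matrix (Fin n) (Fin n) ℝ) (i j : Fin n) :
    (kirchhoff a * M) i j = ∑ l ∈ univ.erase i, a i l * (M i j - M l j) := by
  rw [Matrix.mul_apply, ← add_sum_erase _ _ (mem_univ i)]
  have hoff : ∀ l ∈ univ.erase i, kirchhoff a i l * M l j = -(a i l * M l j) := fun l hl => by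
    simp [kirchhoff, (ne_of_mem_erase hl).symm]
  have hdiag : kirchhoff a i i = ∑ l ∈ univ.erase i, a i l := if_pos rfl
  rw [sum_congr rfl hoff, hdiag, sum_mul, sum_neg_distrib, ← sub_eq_add_neg]
  simp only [mul_sub, sum_sub_distrib]

theorem forestMatrix_succ_add_kirchhoff_mul (hnn : ∀ i j, 0 ≤ a i j) (k : ℕ) :
    forestMatrix a (k + 1) + kirchhoff a * forestMatrix a k = forestWeightSum a (k + 1) • 1 := by
  ext i j
  have h := sum_inTreeRootedAt_eq_sum_elim (a := a) k i j
  rw [sum_augmented_inTreeRootedAt hnn, sum_augmented_elim hnn] at h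
  rw [Matrix.add_apply, kirchhoff_mul_apply, Matrix.smul_apply, Matrix.one_apply, smul_ite,
    smul_eq_mul, mul_one, smul_zero]
  simp only [mul_sub, sum_sub_distrib]
  linarith

theorem mem_forestsOfCard {F : Finset (Fin n × Fin n)} {k : ℕ} :
    F ∈ forestsOfCard a k ↔ IsOutForest a F ∧ F.card = k := by
  simp [forestsOfCard]

theorem forestsOfCard_zero : forestsOfCard a 0 = {∅} := by
  ext F
  rw [mem_forestsOfCard, card_eq_zero, mem_singleton]
  exact ⟨And.right, fun hF => ⟨hF ▸ isOutForest_empty, hF⟩⟩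

theorem forestMatrix_zero : forestMatrix a 0 = 1 := by
  ext i j
  have hroot : InTreeRootedAt (∅ : Finset (Fin n × Fin n)) j i ↔ i = j := by
    simp [InTreeRootedAt, reflTransGen_iff_eq]
  rw [forestMatrix, Matrix.of_apply, forestsOfCard_zero, Matrix.one_apply, filter_singleton]
  simp only [hroot]
  by_cases hij : i = j <;> simp [hij, forestWeight]

theorem forestWeightSum_zero : forestWeightSum a 0 = 1 := by
  simp [forestWeightSum, forestsOfCard_zero, forestWeight]

theorem bddAbove_card_isOutForest : BddAbove {k | ∃ F, IsOutForest a F ∧ F.card = k} :=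
  ⟨Fintype.card (Fin n × Fin n), by
    rintro _ ⟨F, -, rfl⟩
    exact card_le_univ F⟩

theorem IsOutForest.card_le_maxForestSize {F : Finset (Fin n × Fin n)} (h : IsOutForest a F) :
    F.card ≤ maxForestSize a :=
  le_csSup bddAbove_card_isOutForest ⟨F, h, rfl⟩

theorem exists_isOutForest_card_eq_maxForestSize (a : Matrix (Fin n) (Fin n) ℝ) :
    ∃ F, IsOutForest a F ∧ F.card = maxForestSize a :=
  Nat.sSup_mem (s := {k | ∃ F, IsOutForest a F ∧ F.card = k})
    ⟨0, ∅, isOutForest_empty, rfl⟩ bddAbove_card_isOutForest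

theorem forestsOfCard_eq_empty {k : ℕ} (hk : maxForestSize a < k) : forestsOfCard a k = ∅ := by
  refine eq_empty_of_forall_notMem fun F hFk => ?_
  obtain ⟨hF, rfl⟩ := mem_forestsOfCard.mp hFk
  exact absurd hF.card_le_maxForestSize (by omega)

theorem forestMatrix_eq_zero {k : ℕ} (hk : maxForestSize a < k) : forestMatrix a k = 0 := by
  ext i j
  simp [forestMatrix, forestsOfCard_eq_empty hk]

theorem forestWeightSum_eq_zero {k : ℕ} (hk : maxForestSize a < k) : forestWeightSum a k = 0 := by
  simp [forestWeightSum, forestsOfCard_eq_empty hk]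

theorem forestWeightSum_maxForestSize_pos (a : Matrix (Fin n) (Fin n) ℝ) :
    0 < forestWeightSum a (maxForestSize a) := by
  obtain ⟨F, hF, hcard⟩ := exists_isOutForest_card_eq_maxForestSize a
  refine sum_pos (fun G hG => prod_pos fun e he => (mem_forestsOfCard.mp hG).1.1 e he)
    ⟨F, mem_forestsOfCard.mpr ⟨hF, hcard⟩⟩

theorem barJ_eq_smul (a : Matrix (Fin n) (Fin n) ℝ) :
    barJ a = (forestWeightSum a (maxForestSize a))⁻¹ • forestMatrix a (maxForestSize a) := by
  ext i j
  rw [barJ, Matrix.of_apply, div_eq_inv_mul]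
  rfl

theorem commute_kirchhoff_forestMatrix (hnn : ∀ i j, 0 ≤ a i j) (k : ℕ) :
    Commute (kirchhoff a) (forestMatrix a k) := by
  induction k with
  | zero => simpa only [forestMatrix_zero] using Commute.one_right _
  | succ k ih =>
    rw [eq_sub_of_add_eq (forestMatrix_succ_add_kirchhoff_mul hnn k)]
    exact ((Commute.one_right _).smul_right _).sub_right ((Commute.refl _).mul_right ih)

theorem kirchhoff_mul_forestMatrix_maxForestSize (hnn : ∀ i j, 0 ≤ a i j) :
    kirchhoff a * forestMatrix a (maxForestSize a) = 0 := by
  simpa [forestMatrix_eq_zero, forestWeightSum_eq_zero] using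
    forestMatrix_succ_add_kirchhoff_mul hnn (maxForestSize a)

theorem forestMatrix_maxForestSize_mul_kirchhoff (hnn : ∀ i j, 0 ≤ a i j) :
    forestMatrix a (maxForestSize a) * kirchhoff a = 0 := by
  rw [← (commute_kirchhoff_forestMatrix hnn _).eq, kirchhoff_mul_forestMatrix_maxForestSize hnn]

theorem forestMatrix_maxForestSize_mul (hnn : ∀ i j, 0 ≤ a i j) (k : ℕ) :
    forestMatrix a (maxForestSize a) * forestMatrix a k =
      forestWeightSum a k • forestMatrix a (maxForestSize a) := by
  cases k with
  | zero => rw [forestMatrix_zero, forestWeightSum_zero, Matrix.mul_one, one_smul]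
  | succ k =>
    rw [eq_sub_of_add_eq (forestMatrix_succ_add_kirchhoff_mul hnn k), Matrix.mul_sub,
      Matrix.mul_smul, Matrix.mul_one, ← Matrix.mul_assoc,
      forestMatrix_maxForestSize_mul_kirchhoff hnn, Matrix.zero_mul, sub_zero]

theorem trace_forestMatrix (k : ℕ) :
    (forestMatrix a k).trace = ((n - k : ℕ) : ℝ) * forestWeightSum a k := by
  classical
  simp only [Matrix.trace, Matrix.diag, forestMatrix, Matrix.of_apply, sum_filter]
  rw [sum_comm, forestWeightSum, mul_sum]
  refine sum_congr rfl fun F hFk => ?_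
  obtain ⟨hF, rfl⟩ := mem_forestsOfCard.mp hFk
  have hroots : (univ.filter fun i => InTreeRootedAt F i i) =
      univ.filter fun v => ∀ u, (u, v) ∉ F :=
    filter_congr fun v _ => ⟨And.left, fun hv => ⟨hv, .refl⟩⟩
  have hcard : #(univ.filter fun v => ∀ u, (u, v) ∉ F) = n - #F := by
    convert Nat.eq_sub_of_add_eq (card_filter_forall_not_mem_add_card fun _ _ _ => hF.eq_of_mem)
    exact (Fintype.card_fin n).symm
  rw [← sum_filter, sum_const, nsmul_eq_mul, hroots, hcard]

end ForestMatrix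

/-- Properties of the normalized matrix of maximum out-forests `J̄`:
`rank J̄ = d`, `J̄² = J̄` and `L J̄ = J̄ L = 0`. -/
theorem barJ_properties {n : ℕ} (a : Matrix (Fin n) (Fin n) ℝ)
    (hnn : ∀ i j, 0 ≤ a i j) :
    (barJ a).rank = outForestDim a ∧ barJ a * barJ a = barJ a ∧
      kirchhoff a * barJ a = 0 ∧ barJ a * kirchhoff a = 0 := by
  have hσ := (forestWeightSum_maxForestSize_pos a).ne'
  have hidem : barJ a * barJ a = barJ a := by
    rw [barJ_eq_smul, Matrix.smul_mul, Matrix.mul_smul, forestMatrix_maxForestSize_mul hnn,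
      smul_smul, smul_smul, inv_mul_cancel_right₀ hσ]
  have htrace : (barJ a).trace = outForestDim a := by
    rw [barJ_eq_smul, Matrix.trace_smul, trace_forestMatrix, smul_eq_mul, mul_left_comm,
      inv_mul_cancel₀ hσ, mul_one, outForestDim]
  refine ⟨?_, hidem, ?_, ?_⟩
  · exact_mod_cast (Matrix.rank_eq_trace_of_isIdempotentElem hidem).trans htrace
  · rw [barJ_eq_smul, Matrix.mul_smul, kirchhoff_mul_forestMatrix_maxForestSize hnn, smul_zero]
  · rw [barJ_eq_smul, Matrix.smul_mul, forestMatrix_maxForestSize_mul_kirchhoff hnn, smul_zero]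
end
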